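/- Let 0 < μ < L < ∞ and q = μ/L. Let f : ℝ^n → ℝ be L-smooth and μ-strongly convex. Let c_{k−1} > 1, and let x_{k−1}, d_{k−1} ∈ ℝ^n with ∇f(x_{k−1}) ≠ 0, ⟨∇f(x_{k−1}), d_{k−1}⟩ = ‖∇f(x_{k−1})‖², and ‖d_{k−1}‖² = c_{k−1}‖∇f(x_{k−1})‖². Let γ_{k−1} ∈ ℝ minimize γ ↦ f(x_{k−1} − γ d_{k−1}) over ℝ, set x_k = x_{k−1} − γ_{k−1} d_{k−1}, let β_{k−1} = ‖∇f(x_k)‖²/‖∇f(x_{k−1})‖² (the Fletcher–Reeves update), and set d_k = ∇f(x_k) + β_{k−1} d_{k−1}. Then ‖d_k‖² ≤ c_k ‖∇f(x_k)‖², where c_k = 1 + (1 − q + 2√((c_{k−1} − 1)q))² / (4q). -/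

import Mathlib

open scoped InnerProductSpace

section Aux

variable {E : Type*} [NormedAddCommGroup E] [InnerProductSpace ℝ E] [CompleteSpace E]

lemma line_hasDerivAt (f : E → ℝ) (hdiff : Differentiable ℝ f) (a v : E) (t : ℝ) :
    HasDerivAt (fun s : ℝ => f (a + s • v)) ⟪gradient f (a + t • v), v⟫_ℝ t := by
  have h1 : HasFDerivAt f (InnerProductSpace.toDual ℝ E (gradient f (a + t • v))) (a + t • v) :=
    (hdiff _).hasGradientAt
  have h2 : HasDerivAt (fun s : ℝ => a + s • v) v t := by
    simpa using ((hasDerivAt_id t).smul_const v).const_add a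
  exact h1.comp_hasDerivAt t h2

lemma descent_lemma (f : E → ℝ) (hdiff : Differentiable ℝ f) (L : ℝ)
    (hsmooth : ∀ a b, ‖gradient f a - gradient f b‖ ≤ L * ‖a - b‖) (a v : E) :
    f (a + v) ≤ f a + ⟪gradient f a, v⟫_ℝ + L / 2 * ‖v‖ ^ 2 := by
  set ψ : ℝ → ℝ := fun t => f (a + t • v) - t * ⟪gradient f a, v⟫_ℝ - L * t ^ 2 / 2 * ‖v‖ ^ 2
    with hψ
  have hder : ∀ t : ℝ, HasDerivAt ψ
      (⟪gradient f (a + t • v) - gradient f a, v⟫_ℝ - L * t * ‖v‖ ^ 2) t := by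
    intro t
    have h1 := line_hasDerivAt f hdiff a v t
    have h2 : HasDerivAt (fun s : ℝ => s * ⟪gradient f a, v⟫_ℝ) ⟪gradient f a, v⟫_ℝ t := by
      simpa using (hasDerivAt_id t).mul_const ⟪gradient f a, v⟫_ℝ
    have h3 : HasDerivAt (fun s : ℝ => L * s ^ 2 / 2 * ‖v‖ ^ 2) (L * t * ‖v‖ ^ 2) t := by
      have := ((hasDerivAt_pow 2 t).const_mul L).div_const 2
      have := this.mul_const (‖v‖ ^ 2)
      refine this.congr_deriv ?_
      ring
    have := (h1.sub h2).sub h3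
    refine this.congr_deriv ?_
    rw [inner_sub_left]; try ring
  have hanti : AntitoneOn ψ (Set.Icc 0 1) := by
    apply antitoneOn_of_deriv_nonpos (convex_Icc 0 1)
    · exact Continuous.continuousOn
        (Differentiable.continuous fun t => (hder t).differentiableAt)
    · exact fun t ht => ((hder t).differentiableAt).differentiableWithinAt
    · intro t ht
      rw [(hder t).deriv]
      have ht' : 0 < t := by
        simp [interior_Icc] at ht; exact ht.1
      have hcs : ⟪gradient f (a + t • v) - gradient f a, v⟫_ℝ ≤
          ‖gradient f (a + t • v) - gradient f a‖ * ‖v‖ := real_inner_le_norm _ _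
      have hlip := hsmooth (a + t • v) a
      have : ‖a + t • v - a‖ = t * ‖v‖ := by
        simp [norm_smul, abs_of_pos ht']
      rw [this] at hlip
      nlinarith [norm_nonneg v, norm_nonneg (gradient f (a + t • v) - gradient f a)]
  have := hanti (Set.left_mem_Icc.2 zero_le_one) (Set.right_mem_Icc.2 zero_le_one) zero_le_one
  simp only [hψ, one_smul, zero_smul, add_zero, one_pow, mul_one, zero_pow, mul_zero,
    zero_mul, sub_zero, one_mul] at this
  nlinarith [this]

lemma lower_bound (f : E → ℝ) (hdiff : Differentiable ℝ f) (μ L : ℝ) (hμ : 0 < μ) (hμL : μ < L)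
    (hsmooth : ∀ a b, ‖gradient f a - gradient f b‖ ≤ L * ‖a - b‖)
    (hsc : ∀ a b, f a ≥ f b + ⟪gradient f b, a - b⟫_ℝ + μ / 2 * ‖a - b‖ ^ 2) (a b : E) :
    f b ≥ f a + ⟪gradient f a, b - a⟫_ℝ + μ / 2 * ‖b - a‖ ^ 2
      + 1 / (2 * (L - μ)) * ‖gradient f b - gradient f a - μ • (b - a)‖ ^ 2 := by
  set u := gradient f a with hu
  set v := gradient f b with hv
  set Δ := v - u - μ • (b - a) with hΔ
  set c : ℝ := (L - μ)⁻¹ with hc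
  have hLμ : (0:ℝ) < L - μ := by linarith
  set z : E := b - c • Δ with hz
  have hI1 := hsc z a
  have hI2 := descent_lemma f hdiff L hsmooth b (z - b)
  rw [add_sub_cancel] at hI2
  have hzb : z - b = -(c • Δ) := by rw [hz]; abel
  have hza : z - a = (b - a) - c • Δ := by rw [hz]; abel
  have e1 : ‖(b - a) - c • Δ‖ ^ 2 = ‖b - a‖^2 - 2 * c * ⟪b - a, Δ⟫_ℝ + c^2 * ‖Δ‖^2 := by
    rw [norm_sub_sq_real, real_inner_smul_right, norm_smul, Real.norm_eq_abs, mul_pow, sq_abs]; ring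
  have e2 : ‖-(c • Δ)‖^2 = c^2 * ‖Δ‖^2 := by
    rw [norm_neg, norm_smul, Real.norm_eq_abs, mul_pow, sq_abs]
  have e3 : ⟪u, (b - a) - c • Δ⟫_ℝ = ⟪u, b - a⟫_ℝ - c * ⟪u, Δ⟫_ℝ := by
    rw [inner_sub_right, real_inner_smul_right]
  have e4 : ⟪v, -(c • Δ)⟫_ℝ = -(c * ⟪v, Δ⟫_ℝ) := by
    rw [inner_neg_right, real_inner_smul_right]
  rw [hza, e1, e3] at hI1
  rw [hzb, e2, e4] at hI2
  have hvuΔ : ⟪v, Δ⟫_ℝ - ⟪u, Δ⟫_ℝ - μ * ⟪b - a, Δ⟫_ℝ = ‖Δ‖^2 := by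
    rw [show (⟪v, Δ⟫_ℝ - ⟪u, Δ⟫_ℝ - μ * ⟪b - a, Δ⟫_ℝ) = ⟪v - u - μ • (b - a), Δ⟫_ℝ by
      simp [inner_sub_left, real_inner_smul_left], ← hΔ, real_inner_self_eq_norm_sq]
  have hcL : c * (L - μ) = 1 := inv_mul_cancel₀ (ne_of_gt hLμ)
  have h6 : c * ⟪v, Δ⟫_ℝ - c * ⟪u, Δ⟫_ℝ - μ * c * ⟪b - a, Δ⟫_ℝ = c * ‖Δ‖^2 := by
    linear_combination c * hvuΔ
  have h7 : (L - μ) * (c^2 * ‖Δ‖^2) = c * ‖Δ‖^2 := by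
    linear_combination (c * ‖Δ‖^2) * hcL
  have h8 : 1 / (2 * (L - μ)) = c / 2 := by
    rw [hc]; field_simp
  rw [h8]
  nlinarith [hI1, hI2, h6, h7]

lemma interp (f : E → ℝ) (hdiff : Differentiable ℝ f) (μ L : ℝ) (hμ : 0 < μ) (hμL : μ < L)
    (hsmooth : ∀ a b, ‖gradient f a - gradient f b‖ ≤ L * ‖a - b‖)
    (hsc : ∀ a b, f a ≥ f b + ⟪gradient f b, a - b⟫_ℝ + μ / 2 * ‖a - b‖ ^ 2) (a b : E) :
    ‖gradient f a - gradient f b‖ ^ 2 + μ * L * ‖a - b‖ ^ 2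
      ≤ (L + μ) * ⟪gradient f a - gradient f b, a - b⟫_ℝ := by
  set u := gradient f a with hu
  set v := gradient f b with hv
  have hLμ : (0:ℝ) < L - μ := by linarith
  have h1 := lower_bound f hdiff μ L hμ hμL hsmooth hsc a b
  have h2 := lower_bound f hdiff μ L hμ hμL hsmooth hsc b a
  have hn : ‖b - a‖ ^ 2 = ‖a - b‖ ^ 2 := by rw [norm_sub_rev]
  have hΔ : ‖v - u - μ • (b - a)‖ = ‖u - v - μ • (a - b)‖ := by
    rw [← norm_neg]; congr 1
    simp [smul_sub]; abel
  have hΔ2 : ‖u - v - μ • (a - b)‖ ^ 2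
      = ‖u - v‖ ^ 2 - 2 * (μ * ⟪u - v, a - b⟫_ℝ) + μ ^ 2 * ‖a - b‖ ^ 2 := by
    rw [norm_sub_sq_real, real_inner_smul_right, norm_smul, Real.norm_eq_abs, mul_pow, sq_abs]
  have hub : ⟪u, b - a⟫_ℝ = ⟪u, b⟫_ℝ - ⟪u, a⟫_ℝ := by rw [inner_sub_right]
  have hva : ⟪v, a - b⟫_ℝ = ⟪v, a⟫_ℝ - ⟪v, b⟫_ℝ := by rw [inner_sub_right]
  have huv : ⟪u - v, a - b⟫_ℝ = ⟪u, a⟫_ℝ - ⟪u, b⟫_ℝ - ⟪v, a⟫_ℝ + ⟪v, b⟫_ℝ := by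
    rw [inner_sub_left, inner_sub_right, inner_sub_right]; ring
  rw [hΔ, hΔ2, hn, hub, huv] at h1
  rw [hΔ2, hva, huv] at h2
  have key : ⟪u - v, a - b⟫_ℝ ≥ μ * ‖a - b‖ ^ 2
      + (1 / (L - μ)) * (‖u - v‖ ^ 2 - 2 * (μ * ⟪u - v, a - b⟫_ℝ) + μ ^ 2 * ‖a - b‖ ^ 2) := by
    rw [huv]
    have : 1 / (L - μ) = 2 * (1 / (2 * (L - μ))) := by field_simp
    rw [this]
    linarith [h1, h2, huv]
  have h9 : (L - μ) * ((1 / (L - μ)) * (‖u - v‖ ^ 2 - 2 * (μ * ⟪u - v, a - b⟫_ℝ)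
      + μ ^ 2 * ‖a - b‖ ^ 2))
      = ‖u - v‖ ^ 2 - 2 * (μ * ⟪u - v, a - b⟫_ℝ) + μ ^ 2 * ‖a - b‖ ^ 2 := by
    field_simp
  nlinarith [key, h9, mul_le_mul_of_nonneg_left key (le_of_lt hLμ)]

lemma exact_ls_orth (f : E → ℝ) (hdiff : Differentiable ℝ f) (x d : E) (γ : ℝ)
    (hls : ∀ t : ℝ, f (x - γ • d) ≤ f (x - t • d)) :
    ⟪gradient f (x - γ • d), d⟫_ℝ = 0 := by
  have hmin : IsLocalMin (fun s : ℝ => f (x + s • (-d))) γ := by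
    apply Filter.Eventually.of_forall
    intro t
    simpa [sub_eq_add_neg, smul_neg] using hls t
  have hder := line_hasDerivAt f hdiff x (-d) γ
  have h0 := hmin.hasDerivAt_eq_zero hder
  have hx : x + γ • (-d) = x - γ • d := by rw [smul_neg, ← sub_eq_add_neg]
  rw [hx, inner_neg_right] at h0
  linarith

private lemma quad_aux (μ L c G X γ : ℝ) (hμ : 0 < μ) (hL : 0 < L) (hc : 0 < c) (hG : 0 ≤ G)
    (hkey : X + μ * L * (γ ^ 2 * (c * G)) ≤ (L + μ) * (γ * G)) :
    X * (4 * μ * L * c) - 4 * μ * L * G ≤ G * (L - μ) ^ 2 := by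
  nlinarith [mul_nonneg hG (sq_nonneg (2 * μ * L * c * γ - (L + μ))),
    mul_le_mul_of_nonneg_right hkey (by positivity : (0:ℝ) ≤ 4 * μ * L * c)]

end Aux

set_option maxHeartbeats 1000000 in
/-- Worst-case search direction for Fletcher–Reeves: if the previous search
direction has quality ratio `‖d_{k−1}‖² = c_{k−1}‖∇f(x_{k−1})‖²` with
`c_{k−1} > 1`, then after one FR iteration with exact line search the new
direction satisfies `‖d_k‖² ≤ c_k‖∇f(x_k)‖²` with
`c_k = 1 + (1 − q + 2√((c_{k−1} − 1)q))²/(4q)`, where `q = μ/L`. -/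
theorem fr_worst_case_search_direction
    (n : ℕ) (μ L : ℝ) (hμ : 0 < μ) (hμL : μ < L)
    (q : ℝ) (hq : q = μ / L)
    (f : EuclideanSpace ℝ (Fin n) → ℝ)
    (hdiff : Differentiable ℝ f)
    (hsmooth : ∀ a b, ‖gradient f a - gradient f b‖ ≤ L * ‖a - b‖)
    (hsc : ∀ a b, f a ≥ f b + ⟪gradient f b, a - b⟫_ℝ + μ / 2 * ‖a - b‖ ^ 2)
    (ckm : ℝ) (hckm : 1 < ckm)
    (xkm dkm : EuclideanSpace ℝ (Fin n))
    (hgkm : gradient f xkm ≠ 0)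
    (hdir : ⟪gradient f xkm, dkm⟫_ℝ = ‖gradient f xkm‖ ^ 2)
    (hratio : ‖dkm‖ ^ 2 = ckm * ‖gradient f xkm‖ ^ 2)
    (γkm : ℝ) (hls : ∀ t : ℝ, f (xkm - γkm • dkm) ≤ f (xkm - t • dkm))
    (xk : EuclideanSpace ℝ (Fin n)) (hxk : xk = xkm - γkm • dkm)
    (βkm : ℝ) (hβ : βkm = ‖gradient f xk‖ ^ 2 / ‖gradient f xkm‖ ^ 2)
    (dk : EuclideanSpace ℝ (Fin n)) (hdk : dk = gradient f xk + βkm • dkm)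
    (ck : ℝ) (hck : ck = 1 + (1 - q + 2 * Real.sqrt ((ckm - 1) * q)) ^ 2 / (4 * q)) :
    ‖dk‖ ^ 2 ≤ ck * ‖gradient f xk‖ ^ 2 := by
  have hL : 0 < L := hμ.trans hμL
  have hq0 : 0 < q := by rw [hq]; positivity
  have hq1 : q < 1 := by rw [hq, div_lt_one hL]; exact hμL
  set g := gradient f xkm with hg
  set g' := gradient f xk with hg'
  set G := ‖g‖ ^ 2 with hG
  set R := ‖g'‖ ^ 2 with hR
  set P := ⟪g, g'⟫_ℝ with hP
  have hGpos : 0 < G := pow_pos (norm_pos_iff.2 hgkm) 2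
  have hR0 : 0 ≤ R := sq_nonneg _
  have hcpos : (0:ℝ) < ckm := lt_trans one_pos hckm
  -- orthogonality of new gradient with old direction
  have horth : ⟪g', dkm⟫_ℝ = 0 := by
    rw [hg', hxk]; exact exact_ls_orth f hdiff xkm dkm γkm hls
  -- interpolation inequality between the two iterates
  have hkey := interp f hdiff μ L hμ hμL hsmooth hsc xkm xk
  have hxmk : xkm - xk = γkm • dkm := by rw [hxk]; abel
  rw [hxmk] at hkey
  have e1 : ⟪g - g', γkm • dkm⟫_ℝ = γkm * G := by
    rw [real_inner_smul_right, inner_sub_left, hdir, horth]; ring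
  have e2 : ‖γkm • dkm‖ ^ 2 = γkm ^ 2 * (ckm * G) := by
    rw [norm_smul, mul_pow, Real.norm_eq_abs, sq_abs, hratio]
  have e3 : ‖g - g'‖ ^ 2 = G - 2 * P + R := by rw [norm_sub_sq_real]; try ring
  rw [e1, e2, e3] at hkey
  clear_value g g' G R P
  -- bound on the orthogonal component of the gradient difference
  set w := (g - g') - ckm⁻¹ • dkm with hwdef
  have hw : ‖w‖ ^ 2 = (G - 2 * P + R) - G / ckm := by
    rw [hwdef, norm_sub_sq_real, e3, real_inner_smul_right, inner_sub_left, hdir, horth,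
      norm_smul, mul_pow, Real.norm_eq_abs, sq_abs, hratio]
    have hcc : ckm⁻¹ * ckm = 1 := inv_mul_cancel₀ hcpos.ne'
    linear_combination (ckm⁻¹ * G) * hcc
  have hwb : ‖w‖ ^ 2 ≤ G * (L - μ) ^ 2 / (4 * μ * L * ckm) := by
    rw [hw, le_div_iff₀ (by positivity)]
    have hcc : ckm⁻¹ * ckm = 1 := inv_mul_cancel₀ hcpos.ne'
    have h4 : G / ckm * (4 * μ * L * ckm) = 4 * μ * L * G := by
      linear_combination (4 * μ * L * G) * hcc
    have h5 : (G - 2 * P + R - G / ckm) * (4 * μ * L * ckm)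
        = (G - 2 * P + R) * (4 * μ * L * ckm) - 4 * μ * L * G := by
      linear_combination -h4
    rw [h5]
    exact quad_aux μ L ckm G (G - 2 * P + R) γkm hμ hL hcpos hGpos.le hkey
  -- orthogonal component of old gradient
  set p := g - ckm⁻¹ • dkm with hpdef
  have hp : ‖p‖ ^ 2 = G * (ckm - 1) / ckm := by
    rw [hpdef, norm_sub_sq_real, real_inner_smul_right, hdir, norm_smul, mul_pow,
      Real.norm_eq_abs, sq_abs, hratio, ← hG]
    have hcc : ckm⁻¹ * ckm = 1 := inv_mul_cancel₀ hcpos.ne'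
    linear_combination (ckm⁻¹ * G - G) * hcc
  have hg'pw : g' = p - w := by rw [hpdef, hwdef]; abel
  have htri : ‖g'‖ ≤ ‖p‖ + ‖w‖ := by rw [hg'pw]; exact norm_sub_le p w
  -- sqrt algebra
  set s := Real.sqrt ((ckm - 1) * q) with hs
  set r := Real.sqrt (G / (q * ckm)) with hr
  have hs0 : 0 ≤ s := Real.sqrt_nonneg _
  have hr0 : 0 ≤ r := Real.sqrt_nonneg _
  have hs2 : s ^ 2 = (ckm - 1) * q := Real.sq_sqrt (by nlinarith)
  have hr2 : r ^ 2 = G / (q * ckm) := Real.sq_sqrt (by positivity)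
  have hpb : ‖p‖ ≤ r * s := by
    have h1 : ‖p‖ = Real.sqrt (G * (ckm - 1) / ckm) := by
      rw [← hp, Real.sqrt_sq (norm_nonneg _)]
    have h2 : G * (ckm - 1) / ckm = (r * s) ^ 2 := by
      rw [mul_pow, hr2, hs2]
      have hqq : q⁻¹ * q = 1 := inv_mul_cancel₀ hq0.ne'
      linear_combination (-(G * (ckm - 1) / ckm)) * hqq
    rw [h1, h2, Real.sqrt_sq (mul_nonneg hr0 hs0)]
  have hwbb : ‖w‖ ≤ r * ((1 - q) / 2) := by
    have h1 : ‖w‖ ≤ Real.sqrt (G * (L - μ) ^ 2 / (4 * μ * L * ckm)) := by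
      rw [← Real.sqrt_sq (norm_nonneg w)]; exact Real.sqrt_le_sqrt hwb
    have h2 : G * (L - μ) ^ 2 / (4 * μ * L * ckm) = (r * ((1 - q) / 2)) ^ 2 := by
      rw [mul_pow, hr2, hq]
      field_simp
      ring
    rwa [h2, Real.sqrt_sq (mul_nonneg hr0 (by linarith))] at h1
  have hgb : ‖g'‖ ≤ r * (s + (1 - q) / 2) := by
    calc ‖g'‖ ≤ ‖p‖ + ‖w‖ := htri
    _ ≤ r * s + r * ((1 - q) / 2) := add_le_add hpb hwbb
    _ = r * (s + (1 - q) / 2) := by ring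
  have hRb : R ≤ G * (ck - 1) / ckm := by
    have h1 : ‖g'‖ ^ 2 ≤ (r * (s + (1 - q) / 2)) ^ 2 :=
      pow_le_pow_left₀ (norm_nonneg _) hgb 2
    have h2 : (r * (s + (1 - q) / 2)) ^ 2 = G * (ck - 1) / ckm := by
      rw [mul_pow, hr2, hck]; ring
    rw [hR, ← h2]; exact h1
  -- final assembly
  have hβd : ⟪g', βkm • dkm⟫_ℝ = 0 := by rw [real_inner_smul_right, horth, mul_zero]
  have hdk2 : ‖dk‖ ^ 2 = R + βkm ^ 2 * (ckm * G) := by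
    rw [hdk, norm_add_sq_real, hβd, norm_smul, mul_pow, Real.norm_eq_abs, sq_abs, hratio, ← hR]
    ring
  have hβv : βkm = R / G := hβ
  rw [hdk2, hβv]
  have hGG : G⁻¹ * G = 1 := inv_mul_cancel₀ hGpos.ne'
  have hfin : R + (R / G) ^ 2 * (ckm * G) = R + R ^ 2 * ckm / G := by
    linear_combination (R ^ 2 * ckm / G) * hGG
  rw [hfin]
  have hRb' : R * ckm ≤ G * (ck - 1) := (le_div_iff₀ hcpos).mp hRb
  have hmain : R ^ 2 * ckm / G ≤ (ck - 1) * R := by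
    rw [div_le_iff₀ hGpos]
    have hh := mul_le_mul_of_nonneg_left hRb' hR0
    linarith [hh]
  linarith
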